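/- arXiv:1001.5148 — 2 statements merged into one kernel-verified Lean document; each statement's English description precedes it below -/
import Mathlib

section
/- The NEM is invariant under local unitaries: for every separable bipartite state ρ on ℂ^{d₁}⊗ℂ^{d₂} and all unitaries U₁ on ℂ^{d₁} and U₂ on ℂ^{d₂}, N(ρ) = N((U₁⊗U₂) ρ (U₁⊗U₂)†). -/
open scoped ComplexOrder Kronecker Matrix

noncomputable section

/-- A quantum state: positive semidefinite with unit trace. -/
def IsQState {n : Type*} [Fintype n] [DecidableEq n] (ρ : Matrix n n ℂ) : Prop :=
  ρ.PosSemidef ∧ ρ.trace = 1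

/-- The rank-one projector |ψ⟩⟨ψ| associated to a vector ψ. -/
def outer {n : Type*} [Fintype n] (ψ : n → ℂ) : Matrix n n ℂ :=
  Matrix.of fun i j => ψ i * (starRingEnd ℂ) (ψ j)

/-- The partial trace over the second subsystem. -/
def ptraceB {d₁ d₂ : ℕ} (ρ : Matrix (Fin d₁ × Fin d₂) (Fin d₁ × Fin d₂) ℂ) :
    Matrix (Fin d₁) (Fin d₁) ℂ :=
  Matrix.of fun i k => ∑ j, ρ (i, j) (k, j)

/-- The I-concurrence of a pure state: C(|ψ⟩) = √(2(1 − Tr ρ_A²)). -/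
def pureConc {d₁ d₂ : ℕ} (ψ : Fin d₁ × Fin d₂ → ℂ) : ℝ :=
  Real.sqrt (2 * (1 - ((ptraceB (outer ψ) * ptraceB (outer ψ)).trace).re))

/-- The I-concurrence of a mixed state, via the convex roof. -/
def IConc {d₁ d₂ : ℕ} (ρ : Matrix (Fin d₁ × Fin d₂) (Fin d₁ × Fin d₂) ℂ) : ℝ :=
  sInf { x : ℝ | ∃ (m : ℕ) (p : Fin m → ℝ) (ψ : Fin m → (Fin d₁ × Fin d₂ → ℂ)),
    (∀ i, 0 ≤ p i) ∧ (∑ i, p i = 1) ∧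
    (∀ i, ∑ k, Complex.normSq (ψ i k) = 1) ∧
    ρ = ∑ i, p i • outer (ψ i) ∧ x = ∑ i, p i * pureConc (ψ i) }

/-- Separability of a bipartite state on ℂ^{d₁} ⊗ ℂ^{d₂}. -/
def IsSep {d₁ d₂ : ℕ} (ρ : Matrix (Fin d₁ × Fin d₂) (Fin d₁ × Fin d₂) ℂ) : Prop :=
  ∃ (m : ℕ) (p : Fin m → ℝ) (A : Fin m → Matrix (Fin d₁) (Fin d₁) ℂ)
    (B : Fin m → Matrix (Fin d₂) (Fin d₂) ℂ),
    (∀ i, 0 ≤ p i) ∧ (∑ i, p i = 1) ∧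
    (∀ i, IsQState (A i)) ∧ (∀ i, IsQState (B i)) ∧
    ρ = ∑ i, p i • (A i ⊗ₖ B i)

/-- An entangled bipartite state: a state which is not separable. -/
def IsEnt {d₁ d₂ : ℕ} (ρ : Matrix (Fin d₁ × Fin d₂) (Fin d₁ × Fin d₂) ℂ) : Prop :=
  IsQState ρ ∧ ¬ IsSep ρ

/-- The negative entanglement measure (NEM), via the I-concurrence. -/
def NEM {d₁ d₂ : ℕ} (ρ : Matrix (Fin d₁ × Fin d₂) (Fin d₁ × Fin d₂) ℂ) : ℝ :=
  - sInf { x : ℝ | ∃ (t : ℝ) (σ : Matrix (Fin d₁ × Fin d₂) (Fin d₁ × Fin d₂) ℂ),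
      0 < t ∧ IsEnt σ ∧ 0 < IConc ((1 / (1 + t)) • (ρ + t • σ)) ∧ x = t * IConc σ }

/-- An edge state of separable states (ESS). -/
def IsESS {d₁ d₂ : ℕ} (ρ : Matrix (Fin d₁ × Fin d₂) (Fin d₁ × Fin d₂) ℂ) : Prop :=
  ∀ ε : ℝ, 0 < ε → ∃ σ, IsEnt σ ∧ IsEnt ((1 / (1 + ε)) • (ρ + ε • σ))


section AuxNEM

variable {d₁ d₂ : ℕ}

private lemma auxKronCT (A : Matrix (Fin d₁) (Fin d₁) ℂ) (B : Matrix (Fin d₂) (Fin d₂) ℂ) :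
    (A ⊗ₖ B)ᴴ = Aᴴ ⊗ₖ Bᴴ := by
  ext ⟨i, j⟩ ⟨k, l⟩
  simp [Matrix.conjTranspose_apply, Matrix.kroneckerMap_apply, mul_comm]

private lemma auxKronInv {U₁ : Matrix (Fin d₁) (Fin d₁) ℂ} {U₂ : Matrix (Fin d₂) (Fin d₂) ℂ}
    (h1 : U₁ᴴ * U₁ = 1) (h2 : U₂ᴴ * U₂ = 1) : (U₁ ⊗ₖ U₂)ᴴ * (U₁ ⊗ₖ U₂) = 1 := by
  rw [auxKronCT, ← Matrix.mul_kronecker_mul, h1, h2, Matrix.one_kronecker_one]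

private lemma auxTraceConj {n : Type*} [Fintype n] [DecidableEq n]
    {V : Matrix n n ℂ} (h : Vᴴ * V = 1) (M : Matrix n n ℂ) :
    (V * M * Vᴴ).trace = M.trace := by
  rw [Matrix.trace_mul_cycle, h, one_mul]

private lemma auxOuterMulVec {n : Type*} [Fintype n] [DecidableEq n]
    (V : Matrix n n ℂ) (ψ : n → ℂ) :
    outer (V.mulVec ψ) = V * outer ψ * Vᴴ := by
  ext i j
  simp [outer, Matrix.mul_apply, Matrix.mulVec, dotProduct, Matrix.conjTranspose_apply,
    Finset.sum_mul, Finset.mul_sum, map_sum]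
  exact Finset.sum_congr rfl fun a _ => Finset.sum_congr rfl fun b _ => by ring

private lemma auxTraceOuter {n : Type*} [Fintype n] (v : n → ℂ) :
    (outer v).trace = ∑ k, (Complex.normSq (v k) : ℂ) := by
  simp [outer, Matrix.trace, Matrix.diag, Complex.mul_conj]

private lemma auxNormSqMulVec {n : Type*} [Fintype n] [DecidableEq n]
    {V : Matrix n n ℂ} (h : Vᴴ * V = 1) (ψ : n → ℂ)
    (hψ : ∑ k, Complex.normSq (ψ k) = 1) :
    ∑ k, Complex.normSq ((V.mulVec ψ) k) = 1 := by
  have h0 := congrArg Matrix.trace (auxOuterMulVec V ψ)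
  rw [auxTraceConj h, auxTraceOuter, auxTraceOuter] at h0
  have h1 : ((∑ k, Complex.normSq ((V.mulVec ψ) k) : ℝ) : ℂ)
      = ((∑ k, Complex.normSq (ψ k) : ℝ) : ℂ) := by push_cast; exact h0
  rw [hψ] at h1
  exact_mod_cast h1

private lemma auxPtraceBConj {U₁ : Matrix (Fin d₁) (Fin d₁) ℂ} {U₂ : Matrix (Fin d₂) (Fin d₂) ℂ}
    (h2 : U₂ᴴ * U₂ = 1) (M : Matrix (Fin d₁ × Fin d₂) (Fin d₁ × Fin d₂) ℂ) :
    ptraceB ((U₁ ⊗ₖ U₂) * M * (U₁ ⊗ₖ U₂)ᴴ) = U₁ * ptraceB M * U₁ᴴ := by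
  have hδ : ∀ b d : Fin d₂, ∑ j, U₂ j b * star (U₂ j d) = if d = b then 1 else 0 := by
    intro b d
    have := congrFun (congrFun h2 d) b
    simp [Matrix.mul_apply, Matrix.conjTranspose_apply, Matrix.one_apply] at this
    rw [← this]
    exact Finset.sum_congr rfl fun j _ => by rw [Complex.star_def, mul_comm]
  ext i k
  simp only [ptraceB, Matrix.of_apply, Matrix.mul_apply, Matrix.conjTranspose_apply,
    Matrix.kroneckerMap_apply, Fintype.sum_prod_type, star_mul', Finset.sum_mul,
    Finset.mul_sum]
  trans ∑ c, ∑ d, ∑ a, ∑ b, (U₁ i a * M (a, b) (c, d) * star (U₁ k c)) *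
      ∑ j, U₂ j b * star (U₂ j d)
  · rw [Finset.sum_comm]
    refine Finset.sum_congr rfl fun c _ => ?_
    rw [Finset.sum_comm]
    refine Finset.sum_congr rfl fun d _ => ?_
    rw [Finset.sum_comm]
    refine Finset.sum_congr rfl fun a _ => ?_
    rw [Finset.sum_comm]
    refine Finset.sum_congr rfl fun b _ => ?_
    rw [Finset.mul_sum]
    exact Finset.sum_congr rfl fun j _ => by ring
  · simp_rw [hδ, mul_ite, mul_one, mul_zero, Finset.sum_ite_eq]
    simp only [Finset.mem_univ, if_true]
    refine Finset.sum_congr rfl fun c _ => ?_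
    rw [Finset.sum_comm]

private lemma auxPureConcConj {U₁ : Matrix (Fin d₁) (Fin d₁) ℂ} {U₂ : Matrix (Fin d₂) (Fin d₂) ℂ}
    (h1 : U₁ᴴ * U₁ = 1) (h2 : U₂ᴴ * U₂ = 1) (ψ : Fin d₁ × Fin d₂ → ℂ) :
    pureConc ((U₁ ⊗ₖ U₂).mulVec ψ) = pureConc ψ := by
  unfold pureConc
  rw [auxOuterMulVec, auxPtraceBConj h2]
  set A := ptraceB (outer ψ) with hA
  have e : U₁ * A * U₁ᴴ * (U₁ * A * U₁ᴴ) = U₁ * (A * A) * U₁ᴴ := by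
    simp only [mul_assoc]
    rw [← mul_assoc U₁ᴴ U₁ (A * U₁ᴴ), h1, one_mul]
  rw [e, auxTraceConj h1]

private lemma auxConjCancel {U₁ : Matrix (Fin d₁) (Fin d₁) ℂ} {U₂ : Matrix (Fin d₂) (Fin d₂) ℂ}
    (h1 : U₁ᴴ * U₁ = 1) (h2 : U₂ᴴ * U₂ = 1)
    (ρ : Matrix (Fin d₁ × Fin d₂) (Fin d₁ × Fin d₂) ℂ) :
    (U₁ ⊗ₖ U₂)ᴴ * ((U₁ ⊗ₖ U₂) * ρ * (U₁ ⊗ₖ U₂)ᴴ) * ((U₁ ⊗ₖ U₂)ᴴ)ᴴ = ρ := by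
  have hv := auxKronInv h1 h2
  rw [Matrix.conjTranspose_conjTranspose]
  simp only [mul_assoc]
  rw [hv, mul_one, ← mul_assoc, hv, one_mul]

private lemma auxDecompConj {U₁ : Matrix (Fin d₁) (Fin d₁) ℂ} {U₂ : Matrix (Fin d₂) (Fin d₂) ℂ}
    {m : ℕ} (p : Fin m → ℝ) (ψ : Fin m → (Fin d₁ × Fin d₂ → ℂ))
    {ρ : Matrix (Fin d₁ × Fin d₂) (Fin d₁ × Fin d₂) ℂ}
    (hρ : ρ = ∑ i, p i • outer (ψ i)) :
    (U₁ ⊗ₖ U₂) * ρ * (U₁ ⊗ₖ U₂)ᴴ = ∑ i, p i • outer ((U₁ ⊗ₖ U₂).mulVec (ψ i)) := by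
  subst hρ
  simp [Matrix.mul_sum, Matrix.sum_mul, Matrix.mul_smul, Matrix.smul_mul,
    auxOuterMulVec, mul_assoc]

private lemma auxIConcSub {U₁ : Matrix (Fin d₁) (Fin d₁) ℂ} {U₂ : Matrix (Fin d₂) (Fin d₂) ℂ}
    (h1 : U₁ᴴ * U₁ = 1) (h2 : U₂ᴴ * U₂ = 1)
    (ρ : Matrix (Fin d₁ × Fin d₂) (Fin d₁ × Fin d₂) ℂ) (x : ℝ)
    (hx : ∃ (m : ℕ) (p : Fin m → ℝ) (ψ : Fin m → (Fin d₁ × Fin d₂ → ℂ)),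
      (∀ i, 0 ≤ p i) ∧ (∑ i, p i = 1) ∧
      (∀ i, ∑ k, Complex.normSq (ψ i k) = 1) ∧
      ρ = ∑ i, p i • outer (ψ i) ∧ x = ∑ i, p i * pureConc (ψ i)) :
    ∃ (m : ℕ) (p : Fin m → ℝ) (ψ : Fin m → (Fin d₁ × Fin d₂ → ℂ)),
      (∀ i, 0 ≤ p i) ∧ (∑ i, p i = 1) ∧
      (∀ i, ∑ k, Complex.normSq (ψ i k) = 1) ∧
      (U₁ ⊗ₖ U₂) * ρ * (U₁ ⊗ₖ U₂)ᴴ = ∑ i, p i • outer (ψ i) ∧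
      x = ∑ i, p i * pureConc (ψ i) := by
  obtain ⟨m, p, ψ, hp, hps, hn, hd, hxv⟩ := hx
  exact ⟨m, p, fun i => (U₁ ⊗ₖ U₂).mulVec (ψ i), hp, hps,
    fun i => auxNormSqMulVec (auxKronInv h1 h2) _ (hn i),
    auxDecompConj p ψ hd, by
      rw [hxv]
      exact Finset.sum_congr rfl fun i _ => by rw [auxPureConcConj h1 h2]⟩

private lemma auxIConcConj {U₁ : Matrix (Fin d₁) (Fin d₁) ℂ} {U₂ : Matrix (Fin d₂) (Fin d₂) ℂ}
    (h1 : U₁ᴴ * U₁ = 1) (h1' : U₁ * U₁ᴴ = 1) (h2 : U₂ᴴ * U₂ = 1) (h2' : U₂ * U₂ᴴ = 1)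
    (ρ : Matrix (Fin d₁ × Fin d₂) (Fin d₁ × Fin d₂) ℂ) :
    IConc ((U₁ ⊗ₖ U₂) * ρ * (U₁ ⊗ₖ U₂)ᴴ) = IConc ρ := by
  have h1d : (U₁ᴴ)ᴴ * U₁ᴴ = 1 := by rwa [Matrix.conjTranspose_conjTranspose]
  have h2d : (U₂ᴴ)ᴴ * U₂ᴴ = 1 := by rwa [Matrix.conjTranspose_conjTranspose]
  unfold IConc
  congr 1
  ext x
  constructor
  · intro hx
    have := auxIConcSub h1d h2d _ x hx
    rwa [← auxKronCT, auxConjCancel h1 h2] at this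
  · exact auxIConcSub h1 h2 ρ x

private lemma auxQStateConj {U₁ : Matrix (Fin d₁) (Fin d₁) ℂ} {U₂ : Matrix (Fin d₂) (Fin d₂) ℂ}
    (h1 : U₁ᴴ * U₁ = 1) (h2 : U₂ᴴ * U₂ = 1)
    {ρ : Matrix (Fin d₁ × Fin d₂) (Fin d₁ × Fin d₂) ℂ} (hρ : IsQState ρ) :
    IsQState ((U₁ ⊗ₖ U₂) * ρ * (U₁ ⊗ₖ U₂)ᴴ) :=
  ⟨hρ.1.mul_mul_conjTranspose_same _, by rw [auxTraceConj (auxKronInv h1 h2), hρ.2]⟩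

private lemma auxQStateConj1 {n : Type*} [Fintype n] [DecidableEq n]
    {V : Matrix n n ℂ} (h : Vᴴ * V = 1)
    {ρ : Matrix n n ℂ} (hρ : IsQState ρ) : IsQState (V * ρ * Vᴴ) :=
  ⟨hρ.1.mul_mul_conjTranspose_same _, by rw [auxTraceConj h, hρ.2]⟩

private lemma auxSepConj {U₁ : Matrix (Fin d₁) (Fin d₁) ℂ} {U₂ : Matrix (Fin d₂) (Fin d₂) ℂ}
    (h1 : U₁ᴴ * U₁ = 1) (h2 : U₂ᴴ * U₂ = 1)
    {ρ : Matrix (Fin d₁ × Fin d₂) (Fin d₁ × Fin d₂) ℂ} (hρ : IsSep ρ) :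
    IsSep ((U₁ ⊗ₖ U₂) * ρ * (U₁ ⊗ₖ U₂)ᴴ) := by
  obtain ⟨m, p, A, B, hp, hps, hA, hB, hd⟩ := hρ
  refine ⟨m, p, fun i => U₁ * A i * U₁ᴴ, fun i => U₂ * B i * U₂ᴴ, hp, hps,
    fun i => auxQStateConj1 h1 (hA i), fun i => auxQStateConj1 h2 (hB i), ?_⟩
  subst hd
  rw [auxKronCT]
  simp only [Matrix.mul_sum, Matrix.sum_mul, Matrix.mul_smul, Matrix.smul_mul]
  refine Finset.sum_congr rfl fun i _ => ?_
  congr 1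
  rw [← Matrix.mul_kronecker_mul, ← Matrix.mul_kronecker_mul]

private lemma auxEntConj {U₁ : Matrix (Fin d₁) (Fin d₁) ℂ} {U₂ : Matrix (Fin d₂) (Fin d₂) ℂ}
    (h1 : U₁ᴴ * U₁ = 1) (h1' : U₁ * U₁ᴴ = 1) (h2 : U₂ᴴ * U₂ = 1) (h2' : U₂ * U₂ᴴ = 1)
    {σ : Matrix (Fin d₁ × Fin d₂) (Fin d₁ × Fin d₂) ℂ} (hσ : IsEnt σ) :
    IsEnt ((U₁ ⊗ₖ U₂) * σ * (U₁ ⊗ₖ U₂)ᴴ) := by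
  have h1d : (U₁ᴴ)ᴴ * U₁ᴴ = 1 := by rwa [Matrix.conjTranspose_conjTranspose]
  have h2d : (U₂ᴴ)ᴴ * U₂ᴴ = 1 := by rwa [Matrix.conjTranspose_conjTranspose]
  refine ⟨auxQStateConj h1 h2 hσ.1, fun hs => hσ.2 ?_⟩
  have := auxSepConj h1d h2d hs
  rwa [← auxKronCT, auxConjCancel h1 h2] at this

private lemma auxNEMSub {U₁ : Matrix (Fin d₁) (Fin d₁) ℂ} {U₂ : Matrix (Fin d₂) (Fin d₂) ℂ}
    (h1 : U₁ᴴ * U₁ = 1) (h1' : U₁ * U₁ᴴ = 1) (h2 : U₂ᴴ * U₂ = 1) (h2' : U₂ * U₂ᴴ = 1)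
    (ρ : Matrix (Fin d₁ × Fin d₂) (Fin d₁ × Fin d₂) ℂ) (x : ℝ)
    (hx : ∃ (t : ℝ) (σ : Matrix (Fin d₁ × Fin d₂) (Fin d₁ × Fin d₂) ℂ),
      0 < t ∧ IsEnt σ ∧ 0 < IConc ((1 / (1 + t)) • (ρ + t • σ)) ∧ x = t * IConc σ) :
    ∃ (t : ℝ) (σ : Matrix (Fin d₁ × Fin d₂) (Fin d₁ × Fin d₂) ℂ),
      0 < t ∧ IsEnt σ ∧
      0 < IConc ((1 / (1 + t)) • ((U₁ ⊗ₖ U₂) * ρ * (U₁ ⊗ₖ U₂)ᴴ + t • σ)) ∧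
      x = t * IConc σ := by
  obtain ⟨t, σ, ht, hent, hc, hxv⟩ := hx
  refine ⟨t, (U₁ ⊗ₖ U₂) * σ * (U₁ ⊗ₖ U₂)ᴴ, ht, auxEntConj h1 h1' h2 h2' hent, ?_, ?_⟩
  · have e : (1 / (1 + t)) • ((U₁ ⊗ₖ U₂) * ρ * (U₁ ⊗ₖ U₂)ᴴ
        + t • ((U₁ ⊗ₖ U₂) * σ * (U₁ ⊗ₖ U₂)ᴴ))
        = (U₁ ⊗ₖ U₂) * ((1 / (1 + t)) • (ρ + t • σ)) * (U₁ ⊗ₖ U₂)ᴴ := by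
      simp only [Matrix.mul_add, Matrix.add_mul, Matrix.mul_smul, Matrix.smul_mul]
    rw [e, auxIConcConj h1 h1' h2 h2']
    exact hc
  · rw [hxv, auxIConcConj h1 h1' h2 h2']

end AuxNEM

/-- the NEM is invariant under local unitaries. -/
theorem nem_local_unitary_invariant (d₁ d₂ : ℕ)
    (ρ : Matrix (Fin d₁ × Fin d₂) (Fin d₁ × Fin d₂) ℂ)
    (hρ : IsQState ρ) (hsep : IsSep ρ)
    (U₁ : Matrix (Fin d₁) (Fin d₁) ℂ) (hU₁ : U₁ ∈ Matrix.unitaryGroup (Fin d₁) ℂ)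
    (U₂ : Matrix (Fin d₂) (Fin d₂) ℂ) (hU₂ : U₂ ∈ Matrix.unitaryGroup (Fin d₂) ℂ) :
    NEM ρ = NEM ((U₁ ⊗ₖ U₂) * ρ * (U₁ ⊗ₖ U₂)ᴴ) := by
  have h1 : U₁ᴴ * U₁ = 1 := by
    have := hU₁.1; rwa [Matrix.star_eq_conjTranspose] at this
  have h1' : U₁ * U₁ᴴ = 1 := by
    have := hU₁.2; rwa [Matrix.star_eq_conjTranspose] at this
  have h2 : U₂ᴴ * U₂ = 1 := by
    have := hU₂.1; rwa [Matrix.star_eq_conjTranspose] at this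
  have h2' : U₂ * U₂ᴴ = 1 := by
    have := hU₂.2; rwa [Matrix.star_eq_conjTranspose] at this
  have h1d : (U₁ᴴ)ᴴ * U₁ᴴ = 1 := by rwa [Matrix.conjTranspose_conjTranspose]
  have h1d' : U₁ᴴ * (U₁ᴴ)ᴴ = 1 := by rwa [Matrix.conjTranspose_conjTranspose]
  have h2d : (U₂ᴴ)ᴴ * U₂ᴴ = 1 := by rwa [Matrix.conjTranspose_conjTranspose]
  have h2d' : U₂ᴴ * (U₂ᴴ)ᴴ = 1 := by rwa [Matrix.conjTranspose_conjTranspose]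
  unfold NEM
  congr 1
  congr 1
  ext x
  constructor
  · exact auxNEMSub h1 h1' h2 h2' ρ x
  · intro hx
    have := auxNEMSub h1d h1d' h2d h2d' _ x hx
    rwa [← auxKronCT, auxConjCancel h1 h2] at this

end
end

section
/- Every pure separable bipartite state is an edge state of separable states: if ρ = |φ₁⟩⟨φ₁| ⊗ |φ₂⟩⟨φ₂| is a pure product state on ℂ^{d₁}⊗ℂ^{d₂} (with d₁, d₂ ≥ 2), then for every ε > 0 there exists an entangled state σ such that (ρ+εσ)/(1+ε) is entangled. -/
open scoped ComplexOrder Kronecker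

noncomputable section

/-!
A separable state has positive semidefinite partial transpose (Peres). Complete `φ₁`, `φ₂` to
orthonormal pairs `(φ₁, e)`, `(φ₂, f)` (possible as `d₁, d₂ ≥ 2`) and let `σ` be the maximally
entangled state of `(φ₁ ⊗ f + e ⊗ φ₂) / √2`. For `v = a • φ₁ ⊗ φ̄₂ - e ⊗ f̄` the expectation of the
partial transpose is `a ^ 2` in `ρ` and `-a` in `σ`, hence `(a ^ 2 - ε a) / (1 + ε)` in the
mixture; with `a = ε / 2` both `σ` and the mixture violate the Peres criterion.
-/

open Matrix

section PartialTranspose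

variable {m n R : Type*}

def kronVec [Mul R] (x : m → R) (y : n → R) : m × n → R := fun q => x q.1 * y q.2

def partialTranspose (M : Matrix (m × n) (m × n) R) : Matrix (m × n) (m × n) R :=
  of fun p q => M (p.1, q.2) (q.1, p.2)

lemma partialTranspose_add [Add R] (M N : Matrix (m × n) (m × n) R) :
    partialTranspose (M + N) = partialTranspose M + partialTranspose N := rfl

lemma partialTranspose_smul {S : Type*} [SMul S R] (c : S) (M : Matrix (m × n) (m × n) R) :
    partialTranspose (c • M) = c • partialTranspose M := rfl

lemma partialTranspose_sum [AddCommMonoid R] {ι : Type*} (s : Finset ι)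
    (M : ι → Matrix (m × n) (m × n) R) :
    partialTranspose (∑ i ∈ s, M i) = ∑ i ∈ s, partialTranspose (M i) := by
  ext p q
  simp [partialTranspose, Matrix.sum_apply]

lemma partialTranspose_kronecker [Mul R] (A : Matrix m m R) (B : Matrix n n R) :
    partialTranspose (A ⊗ₖ B) = A ⊗ₖ Bᵀ := rfl

lemma partialTranspose_vecMulVec_kronVec [CommSemigroup R] (x z : m → R) (y w : n → R) :
    partialTranspose (vecMulVec (kronVec x y) (kronVec z w)) =
      vecMulVec (kronVec x w) (kronVec z y) := by
  ext p q
  simp only [partialTranspose, vecMulVec_apply, kronVec, of_apply]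
  ac_rfl

lemma kronVec_dotProduct_kronVec [Fintype m] [Fintype n] [CommSemiring R]
    (x z : m → R) (y w : n → R) :
    kronVec x y ⬝ᵥ kronVec z w = (x ⬝ᵥ z) * (y ⬝ᵥ w) := by
  simp only [dotProduct, kronVec, Fintype.sum_prod_type, Finset.sum_mul_sum]
  exact Finset.sum_congr rfl fun _ _ => Finset.sum_congr rfl fun _ _ => mul_mul_mul_comm ..

lemma star_kronVec [CommSemiring R] [StarRing R] (x : m → R) (y : n → R) :
    star (kronVec x y) = kronVec (star x) (star y) := by
  ext q
  simp [kronVec]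

lemma star_dotProduct_vecMulVec_mulVec [Fintype n] [CommSemiring R] [StarRing R]
    (v : n → R) (x y : n → R) :
    star v ⬝ᵥ (vecMulVec x y *ᵥ v) = (star v ⬝ᵥ x) * (y ⬝ᵥ v) := by
  rw [vecMulVec_mulVec, op_smul_eq_smul, dotProduct_smul, smul_eq_mul, mul_comm]

end PartialTranspose

theorem IsSep.posSemidef_partialTranspose {d₁ d₂ : ℕ}
    {ρ : Matrix (Fin d₁ × Fin d₂) (Fin d₁ × Fin d₂) ℂ} (h : IsSep ρ) :
    (partialTranspose ρ).PosSemidef := by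
  obtain ⟨k, p, A, B, hp, -, hA, hB, rfl⟩ := h
  rw [partialTranspose_sum]
  refine posSemidef_sum _ fun i _ => ?_
  rw [partialTranspose_smul, partialTranspose_kronecker]
  exact ((hA i).1.kronecker (hB i).1.transpose).smul (hp i)

lemma outer_eq_vecMulVec {n : Type*} [Fintype n] (ψ : n → ℂ) :
    outer ψ = vecMulVec ψ (star ψ) := rfl

lemma isQState_outer {n : Type*} [Fintype n] [DecidableEq n] {ψ : n → ℂ}
    (hψ : star ψ ⬝ᵥ ψ = 1) : IsQState (outer ψ) := by
  refine ⟨posSemidef_vecMulVec_self_star ψ, ?_⟩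
  rw [outer_eq_vecMulVec, trace_vecMulVec, dotProduct_comm, hψ]

lemma IsQState.mix {n : Type*} [Fintype n] [DecidableEq n] {ρ σ : Matrix n n ℂ}
    (hρ : IsQState ρ) (hσ : IsQState σ) {t : ℝ} (ht : 0 ≤ t) :
    IsQState ((1 / (1 + t)) • (ρ + t • σ)) := by
  refine ⟨(hρ.1.add (hσ.1.smul ht)).smul (by positivity), ?_⟩
  have hne : (1 + t : ℂ) ≠ 0 := by exact_mod_cast (by positivity : (1 + t) ≠ 0)
  rw [trace_smul, trace_add, trace_smul, hρ.2, hσ.2, Complex.real_smul, Complex.real_smul]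
  push_cast
  field_simp

lemma star_dotProduct_self_eq_one {n : Type*} [Fintype n] {x : n → ℂ}
    (hx : ∑ i, Complex.normSq (x i) = 1) : star x ⬝ᵥ x = 1 := by
  simp only [dotProduct, Pi.star_apply, RCLike.star_def, ← Complex.normSq_eq_conj_mul_self]
  exact_mod_cast hx

lemma exists_star_dotProduct_self_eq_one_star_dotProduct_eq_zero {n : Type*} [Fintype n]
    (hn : 2 ≤ Fintype.card n) (g : n → ℂ) :
    ∃ e : n → ℂ, star e ⬝ᵥ e = 1 ∧ star g ⬝ᵥ e = 0 := by
  set K := (ℂ ∙ WithLp.toLp 2 g)ᗮ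
  have hK : K ≠ ⊥ := by
    have hspan : Module.finrank ℂ (ℂ ∙ WithLp.toLp 2 g) ≤ 1 :=
      (finrank_span_le_card _).trans (by simp)
    have := K.finrank_add_finrank_orthogonal
    rw [Submodule.orthogonal_orthogonal, finrank_euclideanSpace] at this
    intro h
    rw [h, finrank_bot] at this
    omega
  obtain ⟨u, hu, hu0⟩ := Submodule.exists_mem_ne_zero_of_ne_bot hK
  let e := (‖u‖⁻¹ : ℂ) • u
  have hnorm : ‖e‖ = 1 := norm_smul_inv_norm hu0
  refine ⟨e.ofLp, ?_, ?_⟩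
  · have he : inner ℂ e e = 1 := by
      simp [inner_self_eq_norm_sq_to_K, hnorm]
    rwa [EuclideanSpace.inner_eq_star_dotProduct, dotProduct_comm] at he
  · have hge : inner ℂ (WithLp.toLp 2 g) e = 0 :=
      Submodule.mem_orthogonal_singleton_iff_inner_right.mp (K.smul_mem _ hu)
    rwa [EuclideanSpace.inner_eq_star_dotProduct, dotProduct_comm] at hge

def ptExpectation {m n : Type*} [Fintype m] [Fintype n] (v : m × n → ℂ)
    (ρ : Matrix (m × n) (m × n) ℂ) : ℂ :=
  star v ⬝ᵥ (partialTranspose ρ *ᵥ v)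

theorem not_isSep_of_ptExpectation_neg {d₁ d₂ : ℕ}
    {ρ : Matrix (Fin d₁ × Fin d₂) (Fin d₁ × Fin d₂) ℂ} (v : Fin d₁ × Fin d₂ → ℂ)
    (hv : ptExpectation v ρ < 0) : ¬ IsSep ρ :=
  fun h => (h.posSemidef_partialTranspose.dotProduct_mulVec_nonneg v).not_gt hv

lemma ptExpectation_mix {m n : Type*} [Fintype m] [Fintype n] (v : m × n → ℂ)
    (ρ σ : Matrix (m × n) (m × n) ℂ) (t : ℝ) :
    ptExpectation v ((1 / (1 + t)) • (ρ + t • σ)) =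
      ((1 / (1 + t) : ℝ) : ℂ) * (ptExpectation v ρ + t * ptExpectation v σ) := by
  simp only [ptExpectation, partialTranspose_smul, partialTranspose_add, smul_mulVec,
    add_mulVec, dotProduct_smul, dotProduct_add, Complex.real_smul]

lemma star_dotProduct_eq_zero_symm {n : Type*} [Fintype n] {x y : n → ℂ}
    (hxy : star x ⬝ᵥ y = 0) : star y ⬝ᵥ x = 0 := by
  rw [star_dotProduct, hxy, star_zero]

section Witness

variable {m n : Type*} [Fintype m] [Fintype n] (g e : m → ℂ) (h f : n → ℂ)

def bellState : Matrix (m × n) (m × n) ℂ :=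
  (1 / 2 : ℝ) • outer (kronVec g f + kronVec e h)

/-- On `span {g ⊗ h̄, e ⊗ f̄}` the partial transpose of `bellState g e h f` is half the swap of
the two vectors, so `g ⊗ h̄ - e ⊗ f̄` is an eigenvector with eigenvalue `-1/2`. -/
def ptWitness (a : ℝ) : m × n → ℂ :=
  (a : ℂ) • kronVec g (star h) - kronVec e (star f)

variable {g e h f}

lemma isQState_outer_kronVec [DecidableEq m] [DecidableEq n] (hg : star g ⬝ᵥ g = 1) (hh : star h ⬝ᵥ h = 1) :
    IsQState (outer (kronVec g h)) :=
  isQState_outer (by rw [star_kronVec, kronVec_dotProduct_kronVec, hg, hh, one_mul])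

lemma isQState_bellState [DecidableEq m] [DecidableEq n] (hg : star g ⬝ᵥ g = 1) (he : star e ⬝ᵥ e = 1)
    (hh : star h ⬝ᵥ h = 1) (hf : star f ⬝ᵥ f = 1) (hge : star g ⬝ᵥ e = 0)
    (hhf : star h ⬝ᵥ f = 0) : IsQState (bellState g e h f) := by
  refine ⟨(posSemidef_vecMulVec_self_star _).smul (by norm_num), ?_⟩
  rw [bellState, trace_smul, outer_eq_vecMulVec, trace_vecMulVec, dotProduct_comm]
  norm_num [star_kronVec, kronVec_dotProduct_kronVec, hg, he, hh, hf, hge, hhf,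
    star_dotProduct_eq_zero_symm hge, star_dotProduct_eq_zero_symm hhf]

lemma ptExpectation_outer_kronVec_ptWitness (a : ℝ) (hg : star g ⬝ᵥ g = 1)
    (hh : star h ⬝ᵥ h = 1) (hge : star g ⬝ᵥ e = 0) (hhf : star h ⬝ᵥ f = 0) :
    ptExpectation (ptWitness g e h f a) (outer (kronVec g h)) = (a : ℂ) ^ 2 := by
  rw [ptExpectation, outer_eq_vecMulVec, star_kronVec, partialTranspose_vecMulVec_kronVec,
    star_dotProduct_vecMulVec_mulVec]
  simp [ptWitness, star_kronVec, kronVec_dotProduct_kronVec, dotProduct_sub, sub_dotProduct,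
    dotProduct_comm h, dotProduct_comm f, hg, hh, hge, star_dotProduct_eq_zero_symm hhf,
    star_dotProduct_eq_zero_symm hge, sq]

lemma ptExpectation_bellState_ptWitness (a : ℝ) (hg : star g ⬝ᵥ g = 1)
    (he : star e ⬝ᵥ e = 1) (hh : star h ⬝ᵥ h = 1) (hf : star f ⬝ᵥ f = 1)
    (hge : star g ⬝ᵥ e = 0) (hhf : star h ⬝ᵥ f = 0) :
    ptExpectation (ptWitness g e h f a) (bellState g e h f) = -a := by
  simp only [ptExpectation, bellState, partialTranspose_smul, smul_mulVec, dotProduct_smul,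
    outer_eq_vecMulVec, star_add, star_kronVec, add_vecMulVec, vecMulVec_add,
    partialTranspose_add, partialTranspose_vecMulVec_kronVec, add_mulVec, dotProduct_add,
    star_dotProduct_vecMulVec_mulVec]
  simp [ptWitness, star_kronVec, kronVec_dotProduct_kronVec, dotProduct_sub, sub_dotProduct,
    dotProduct_comm h, dotProduct_comm f, hg, he, hh, hf, hge,
    star_dotProduct_eq_zero_symm hhf, star_dotProduct_eq_zero_symm hge, ← two_mul, mul_neg]

end Witness

/-- every pure separable bipartite state, i.e. every pure product
state ρ = |φ₁⟩⟨φ₁| ⊗ |φ₂⟩⟨φ₂|, is an edge state of separable states. -/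
theorem pure_product_is_ess (d₁ d₂ : ℕ) (hd₁ : 2 ≤ d₁) (hd₂ : 2 ≤ d₂)
    (φ₁ : Fin d₁ → ℂ) (φ₂ : Fin d₂ → ℂ)
    (hφ₁ : ∑ i, Complex.normSq (φ₁ i) = 1) (hφ₂ : ∑ j, Complex.normSq (φ₂ j) = 1) :
    IsESS (outer (fun q : Fin d₁ × Fin d₂ => φ₁ q.1 * φ₂ q.2)) := by
  change IsESS (outer (kronVec φ₁ φ₂))
  intro ε hε
  have hg := star_dotProduct_self_eq_one hφ₁
  have hh := star_dotProduct_self_eq_one hφ₂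
  obtain ⟨e, he, hge⟩ :=
    exists_star_dotProduct_self_eq_one_star_dotProduct_eq_zero (by simpa using hd₁) φ₁
  obtain ⟨f, hf, hhf⟩ :=
    exists_star_dotProduct_self_eq_one_star_dotProduct_eq_zero (by simpa using hd₂) φ₂
  have hσ := isQState_bellState hg he hh hf hge hhf
  have hρ := isQState_outer_kronVec hg hh
  set v := ptWitness φ₁ e φ₂ f (ε / 2)
  refine ⟨bellState φ₁ e φ₂ f, ⟨hσ, not_isSep_of_ptExpectation_neg v ?_⟩,
    hρ.mix hσ hε.le, not_isSep_of_ptExpectation_neg v ?_⟩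
  · rw [ptExpectation_bellState_ptWitness _ hg he hh hf hge hhf]
    exact_mod_cast (by linarith : -(ε / 2) < 0)
  · rw [ptExpectation_mix, ptExpectation_outer_kronVec_ptWitness _ hg hh hge hhf,
      ptExpectation_bellState_ptWitness _ hg he hh hf hge hhf]
    have hneg : (ε / 2) ^ 2 + ε * -(ε / 2) < 0 := by nlinarith
    exact_mod_cast mul_neg_of_pos_of_neg (by positivity : 0 < 1 / (1 + ε)) hneg


end
end
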